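/- arXiv:2412.15161 — 5 statements merged into one kernel-verified Lean document; each statement's English description precedes it below -/
import Mathlib

section
/- Let P and Q be rank-k orthogonal projections with (I − 2Q)(I − 2P) having no negative eigenvalues, and set Ω = (1/2) log((I − 2Q)(I − 2P)). Then for every t ∈ [0,1], the matrix γ(t) = e^{tΩ} P e^{−tΩ} is again a Hermitian idempotent of rank k, i.e., an element of the Grassmannian. -/
open scoped Real

/-- `U` has no negative (real) eigenvalues. -/
def HasNoNegativeEigenvalue {n : ℕ} (U : Matrix (Fin n) (Fin n) ℂ) : Prop :=
  ∀ μ ∈ spectrum ℂ U, ¬(μ.re < 0 ∧ μ.im = 0)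

/-- `L` is the principal matrix logarithm of `U`: `exp L = U` and the eigenvalues of `L`
have imaginary parts in `(-π, π)`. -/
def IsPrincipalLog {n : ℕ} (U L : Matrix (Fin n) (Fin n) ℂ) : Prop :=
  NormedSpace.exp L = U ∧ ∀ μ ∈ spectrum ℂ L, μ.im ∈ Set.Ioo (-π) π

namespace GeodesicGrassmannAux

open scoped Nat
open NormedSpace Matrix

section helpers

attribute [local instance] Matrix.linftyOpSemiNormedRing Matrix.linftyOpNormedRing
  Matrix.linftyOpNormedAlgebra

variable {n : ℕ}


private lemma pow_mulVec_zero_mono {X : Matrix (Fin n) (Fin n) ℂ} {v : Fin n → ℂ} {k m : ℕ}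
    (h : k ≤ m) (hk : (X ^ k) *ᵥ v = 0) : (X ^ m) *ᵥ v = 0 := by
  rw [show m = (m - k) + k from (Nat.sub_add_cancel h).symm, pow_add, ← Matrix.mulVec_mulVec,
    hk, Matrix.mulVec_zero]

private lemma exp_smul_one (c : ℂ) :
    exp (c • (1 : Matrix (Fin n) (Fin n) ℂ)) = Complex.exp c • 1 := by
  have h1 : (c • (1 : Matrix (Fin n) (Fin n) ℂ)) = algebraMap ℂ _ c := by
    simp [Algebra.algebraMap_eq_smul_one]
  rw [h1]
  erw [← algebraMap_exp_comm (𝕂 := ℂ) (𝔸 := Matrix (Fin n) (Fin n) ℂ) c]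
  rw [Complex.exp_eq_exp_ℂ, Algebra.algebraMap_eq_smul_one]

private lemma exp_eq_smul_exp_sub (A : Matrix (Fin n) (Fin n) ℂ) (μ : ℂ) :
    exp A = Complex.exp μ • exp (A - μ • 1) := by
  have hc : Commute (A - μ • 1) (μ • (1 : Matrix (Fin n) (Fin n) ℂ)) :=
    ((Commute.one_right _).smul_right μ)
  calc exp A = exp ((A - μ • 1) + μ • 1) := by rw [sub_add_cancel]
    _ = exp (A - μ • 1) * exp (μ • (1 : Matrix (Fin n) (Fin n) ℂ)) :=
        Matrix.exp_add_of_commute _ _ hc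
    _ = Complex.exp μ • exp (A - μ • 1) := by
        rw [exp_smul_one, mul_smul_comm, mul_one]


private lemma exp_mulVec_eq (A : Matrix (Fin n) (Fin n) ℂ) (μ : ℂ) (v : Fin n → ℂ) (m : ℕ)
    (hv : ((A - μ • 1) ^ m) *ᵥ v = 0) (s : ℕ) :
    (exp ((s : ℂ) • A)) *ᵥ v =
      Complex.exp ((s : ℂ) * μ) •
        ∑ k ∈ Finset.range m,
          ((k ! : ℂ)⁻¹ * (s : ℂ) ^ k) • (((A - μ • 1) ^ k) *ᵥ v) := by
  set N : Matrix (Fin n) (Fin n) ℂ := A - μ • 1 with hN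
  have hsA : (s : ℂ) • A - ((s : ℂ) * μ) • 1 = (s : ℂ) • N := by
    rw [hN, smul_sub, mul_smul]
  have h1 : exp ((s : ℂ) • A) = Complex.exp ((s : ℂ) * μ) • exp ((s : ℂ) • N) := by
    rw [exp_eq_smul_exp_sub ((s : ℂ) • A) ((s : ℂ) * μ), hsA]
  -- linear map M ↦ M *ᵥ v
  let Lv : Matrix (Fin n) (Fin n) ℂ →ₗ[ℂ] (Fin n → ℂ) :=
    { toFun := fun M => M *ᵥ v
      map_add' := fun X Y => Matrix.add_mulVec X Y v
      map_smul' := fun c X => Matrix.smul_mulVec c X v }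
  have hLvc : Continuous Lv := LinearMap.continuous_of_finiteDimensional Lv
  have hsum : Summable fun k : ℕ => (k ! : ℂ)⁻¹ • ((s : ℂ) • N) ^ k :=
    expSeries_summable' (𝕂 := ℂ) ((s : ℂ) • N)
  have h2 : exp ((s : ℂ) • N) *ᵥ v
      = ∑' k : ℕ, (k ! : ℂ)⁻¹ • (((s : ℂ) • N) ^ k *ᵥ v) := by
    have := (LinearMap.toContinuousLinearMap Lv).map_tsum hsum
    rw [exp_eq_tsum (𝕂 := ℂ)]
    simpa [Lv] using this
  have h3 : ∀ k : ℕ, (k ! : ℂ)⁻¹ • (((s : ℂ) • N) ^ k *ᵥ v)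
      = ((k ! : ℂ)⁻¹ * (s : ℂ) ^ k) • ((N ^ k) *ᵥ v) := by
    intro k
    rw [smul_pow, Matrix.smul_mulVec, smul_smul]
  have h4 : ∀ k ∉ Finset.range m,
      ((k ! : ℂ)⁻¹ * (s : ℂ) ^ k) • ((N ^ k) *ᵥ v) = 0 := by
    intro k hk
    have hmk : m ≤ k := le_of_not_gt (fun h => hk (Finset.mem_range.mpr h))
    rw [pow_mulVec_zero_mono hmk hv, smul_zero]
  calc exp ((s : ℂ) • A) *ᵥ v
      = Complex.exp ((s : ℂ) * μ) • (exp ((s : ℂ) • N) *ᵥ v) := by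
        rw [h1, Matrix.smul_mulVec]
    _ = Complex.exp ((s : ℂ) * μ) •
        ∑ k ∈ Finset.range m, ((k ! : ℂ)⁻¹ * (s : ℂ) ^ k) • ((N ^ k) *ᵥ v) := by
        rw [h2]
        congr 1
        rw [tsum_congr h3, tsum_eq_sum h4]




private lemma exp_sub_smul_pow_mulVec (A : Matrix (Fin n) (Fin n) ℂ) (μ : ℂ) (m : ℕ)
    (v : Fin n → ℂ) (hv : ((A - μ • 1) ^ m) *ᵥ v = 0) :
    ((exp A - Complex.exp μ • 1) ^ m) *ᵥ v = 0 := by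
  set N : Matrix (Fin n) (Fin n) ℂ := A - μ • 1 with hN
  have hsum : Summable fun k : ℕ => (((k + 1)! : ℂ))⁻¹ • N ^ k := by
    refine Summable.of_norm_bounded (norm_expSeries_summable' (𝕂 := ℂ) N) ?_
    intro k
    rw [norm_smul, norm_smul]
    refine mul_le_mul_of_nonneg_right ?_ (norm_nonneg _)
    simp only [norm_inv, Complex.norm_natCast]
    refine inv_anti₀ (by positivity) ?_
    exact_mod_cast Nat.factorial_le (Nat.le_succ k)
  set S : Matrix (Fin n) (Fin n) ℂ := ∑' k : ℕ, (((k + 1)! : ℂ))⁻¹ • N ^ k with hS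
  have hcomm : Commute N S := by
    refine Commute.tsum_right N fun k => ?_
    exact ((Commute.refl N).pow_right k).smul_right _
  have hexpN : exp N = 1 + N * S := by
    have h0 : Summable fun k : ℕ => (k ! : ℂ)⁻¹ • N ^ k := expSeries_summable' (𝕂 := ℂ) N
    rw [exp_eq_tsum (𝕂 := ℂ)]
    show ∑' k : ℕ, (k ! : ℂ)⁻¹ • N ^ k = 1 + N * S
    rw [h0.tsum_eq_zero_add]
    congr 1
    · simp
    · rw [hS, ← hsum.tsum_mul_left N]
      refine tsum_congr fun k => ?_
      rw [mul_smul_comm, ← pow_succ']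
  have key : exp A - Complex.exp μ • 1 = Complex.exp μ • (N * S) := by
    have h1 : exp A = Complex.exp μ • exp N := by
      have hc : Commute N (μ • (1 : Matrix (Fin n) (Fin n) ℂ)) :=
        ((Commute.one_right _).smul_right μ)
      calc exp A = exp (N + μ • 1) := by rw [hN, sub_add_cancel]
        _ = exp N * exp (μ • (1 : Matrix (Fin n) (Fin n) ℂ)) :=
            Matrix.exp_add_of_commute _ _ hc
        _ = Complex.exp μ • exp N := by rw [exp_smul_one, mul_smul_comm, mul_one]
    rw [h1, hexpN, smul_add]
    abel
  rw [key, smul_pow, hcomm.eq, (hcomm.symm).mul_pow, Matrix.smul_mulVec,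
    ← Matrix.mulVec_mulVec, hv, Matrix.mulVec_zero, smul_zero]


private lemma mulVec_eq_of_exp_eq {A B : Matrix (Fin n) (Fin n) ℂ}
    (hAB : exp A = exp B) {μ : ℂ} {v : Fin n → ℂ} {m : ℕ} (hm : 2 ≤ m)
    (hA : ((A - μ • 1) ^ m) *ᵥ v = 0) (hB : ((B - μ • 1) ^ m) *ᵥ v = 0) :
    A *ᵥ v = B *ᵥ v := by
  have hs : ∀ s : ℕ,
      (∑ k ∈ Finset.range m, ((k ! : ℂ)⁻¹ * (s : ℂ) ^ k) • (((A - μ • 1) ^ k) *ᵥ v))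
      = ∑ k ∈ Finset.range m, ((k ! : ℂ)⁻¹ * (s : ℂ) ^ k) • (((B - μ • 1) ^ k) *ᵥ v) := by
    intro s
    have hexp : exp ((s : ℂ) • A) = exp ((s : ℂ) • B) := by
      rw [Nat.cast_smul_eq_nsmul ℂ s A, Nat.cast_smul_eq_nsmul ℂ s B,
        Matrix.exp_nsmul, Matrix.exp_nsmul, hAB]
    have h1 := exp_mulVec_eq A μ v m hA s
    have h2 := exp_mulVec_eq B μ v m hB s
    rw [hexp, h2] at h1
    exact smul_right_injective _ (Complex.exp_ne_zero _) h1.symm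
  -- coordinatewise polynomial argument
  have key : ∀ i : Fin n, (((A - μ • 1)) *ᵥ v) i = (((B - μ • 1)) *ᵥ v) i := by
    intro i
    set c : ℕ → ℂ := fun k => (k ! : ℂ)⁻¹ * ((((A - μ • 1) ^ k) *ᵥ v) i) with hc
    set d : ℕ → ℂ := fun k => (k ! : ℂ)⁻¹ * ((((B - μ • 1) ^ k) *ᵥ v) i) with hd
    set p : Polynomial ℂ := ∑ k ∈ Finset.range m, Polynomial.C (c k) * Polynomial.X ^ k with hp
    set q : Polynomial ℂ := ∑ k ∈ Finset.range m, Polynomial.C (d k) * Polynomial.X ^ k with hq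
    have heval : ∀ s : ℕ, p.eval (s : ℂ) = q.eval (s : ℂ) := by
      intro s
      have := congrFun (hs s) i
      simp only [Finset.sum_apply, Pi.smul_apply, smul_eq_mul] at this
      simp only [hp, hq, Polynomial.eval_finset_sum, Polynomial.eval_mul, Polynomial.eval_C,
        Polynomial.eval_pow, Polynomial.eval_X, hc, hd]
      calc ∑ k ∈ Finset.range m, (k ! : ℂ)⁻¹ * ((((A - μ • 1) ^ k) *ᵥ v) i) * (s : ℂ) ^ k
          = ∑ k ∈ Finset.range m, ((k ! : ℂ)⁻¹ * (s : ℂ) ^ k) * ((((A - μ • 1) ^ k) *ᵥ v) i) := by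
            refine Finset.sum_congr rfl fun k _ => by ring
        _ = ∑ k ∈ Finset.range m, ((k ! : ℂ)⁻¹ * (s : ℂ) ^ k) * ((((B - μ • 1) ^ k) *ᵥ v) i) :=
            this
        _ = ∑ k ∈ Finset.range m, (k ! : ℂ)⁻¹ * ((((B - μ • 1) ^ k) *ᵥ v) i) * (s : ℂ) ^ k := by
            refine Finset.sum_congr rfl fun k _ => by ring
    have hpq : p = q := by
      refine Polynomial.eq_of_infinite_eval_eq p q ?_
      refine Set.Infinite.mono ?_ (Set.infinite_range_of_injective
        (Nat.cast_injective : Function.Injective (Nat.cast : ℕ → ℂ)))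
      rintro x ⟨s, rfl⟩
      exact heval s
    have hcoeff : p.coeff 1 = q.coeff 1 := by rw [hpq]
    have hco : ∀ (c : ℕ → ℂ),
        (∑ k ∈ Finset.range m, Polynomial.C (c k) * Polynomial.X ^ k).coeff 1 = c 1 := by
      intro c
      rw [Polynomial.finset_sum_coeff]
      rw [Finset.sum_eq_single 1]
      · simp
      · intro k hk hk1
        simp [Polynomial.coeff_C_mul, Polynomial.coeff_X_pow, hk1, Ne.symm hk1]
      · intro h; exact absurd (Finset.mem_range.mpr (lt_of_lt_of_le one_lt_two hm)) h
    have := hcoeff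
    rw [hp, hq, hco c, hco d, hc, hd] at this
    simpa using this
  have h5 : (A - μ • 1) *ᵥ v = (B - μ • 1) *ᵥ v := funext key
  have h6 : A *ᵥ v - (μ • 1) *ᵥ v = B *ᵥ v - (μ • 1) *ᵥ v := by
    rw [← Matrix.sub_mulVec, ← Matrix.sub_mulVec, h5]
  exact sub_left_injective h6


private lemma strip_inj {μ μ' : ℂ} (hμ : μ.im ∈ Set.Ioo (-π) π) (hμ' : μ'.im ∈ Set.Ioo (-π) π)
    (h : Complex.exp μ = Complex.exp μ') : μ = μ' := by
  obtain ⟨N, hN⟩ := Complex.exp_eq_exp_iff_exists_int.mp h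
  have him : μ.im = μ'.im + (N : ℝ) * (2 * π) := by
    have := congrArg Complex.im hN
    simpa [Complex.add_im, Complex.mul_im, Complex.mul_re] using this
  have hb : |(N : ℝ) * (2 * π)| < 2 * π := by
    have h1 : -π < μ.im := hμ.1
    have h2 : μ.im < π := hμ.2
    have h3 : -π < μ'.im := hμ'.1
    have h4 : μ'.im < π := hμ'.2
    rw [abs_lt]
    constructor <;> nlinarith
  have hN0 : N = 0 := by
    by_contra hN0
    have h1 : (1 : ℝ) ≤ |(N : ℝ)| := by
      rw [← Int.cast_abs]
      exact_mod_cast Int.one_le_abs (by simpa using hN0)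
    have h2 : (0:ℝ) < 2 * π := by positivity
    rw [abs_mul, abs_of_pos h2] at hb
    have h3 := mul_le_mul_of_nonneg_right h1 h2.le
    rw [one_mul] at h3
    linarith
  rw [hN, hN0] 
  simp

set_option maxHeartbeats 1000000 in
private lemma eq_of_exp_eq (A B : Matrix (Fin n) (Fin n) ℂ)
    (hAB : exp A = exp B)
    (hA : ∀ μ ∈ spectrum ℂ A, μ.im ∈ Set.Ioo (-π) π)
    (hB : ∀ μ ∈ spectrum ℂ B, μ.im ∈ Set.Ioo (-π) π) : A = B := by
  set ι := (Matrix.toLinAlgEquiv' : Matrix (Fin n) (Fin n) ℂ ≃ₐ[ℂ]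
    ((Fin n → ℂ) →ₗ[ℂ] (Fin n → ℂ))) with hι
  have hpow : ∀ (M : Matrix (Fin n) (Fin n) ℂ) (μ : ℂ) (k : ℕ),
      (ι M - μ • 1) ^ k = ι ((M - μ • 1) ^ k) := by
    intro M μ k
    rw [map_pow, map_sub, _root_.map_smul, _root_.map_one]
  have hmem : ∀ (M : Matrix (Fin n) (Fin n) ℂ) (μ : ℂ) (v : Fin n → ℂ),
      v ∈ Module.End.maxGenEigenspace (ι M) μ ↔ ∃ k : ℕ, ((M - μ • 1) ^ k) *ᵥ v = 0 := by
    intro M μ v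
    rw [Module.End.mem_maxGenEigenspace]
    refine exists_congr fun k => ?_
    rw [hpow]
    constructor
    · intro h
      exact h
    · intro h
      exact h
  -- claim 1
  have claim1 : ∀ (M : Matrix (Fin n) (Fin n) ℂ) (μ : ℂ),
      Module.End.maxGenEigenspace (ι M) μ ≤
        Module.End.maxGenEigenspace (ι (exp M)) (Complex.exp μ) := by
    intro M μ v hv
    rw [hmem] at hv ⊢
    obtain ⟨k, hk⟩ := hv
    exact ⟨k, exp_sub_smul_pow_mulVec M μ k v hk⟩
  -- spectrum of nonbot maxGen
  have hspec : ∀ (M : Matrix (Fin n) (Fin n) ℂ) (μ : ℂ),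
      Module.End.maxGenEigenspace (ι M) μ ≠ ⊥ → μ ∈ spectrum ℂ M := by
    intro M μ hbot
    have h1 : Module.End.HasEigenvalue (ι M) μ :=
      Module.End.HasUnifEigenvalue.lt zero_lt_one hbot
    have h2 := Module.End.hasEigenvalue_iff_mem_spectrum.mp h1
    rwa [AlgEquiv.spectrum_eq ι M] at h2
  suffices h : ∀ v : Fin n → ℂ, A *ᵥ v = B *ᵥ v by
    apply Matrix.toLinAlgEquiv'.injective
    apply LinearMap.ext
    intro v
    show Matrix.toLinAlgEquiv' A v = Matrix.toLinAlgEquiv' B v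
    rw [Matrix.toLinAlgEquiv'_apply, Matrix.toLinAlgEquiv'_apply]
    exact h v
  intro v
  have hmain : (⨆ μ : ℂ, Module.End.maxGenEigenspace (ι A) μ) ≤
      LinearMap.ker (ι A - ι B) := by
    refine iSup_le fun μ => ?_
    by_cases hbot : Module.End.maxGenEigenspace (ι A) μ = ⊥
    · rw [hbot]; exact bot_le
    have hμA : μ ∈ spectrum ℂ A := hspec A μ hbot
    have hμstrip := hA μ hμA
    intro w hw
    -- show w ∈ maxGen (ι B) μ
    have hwB : w ∈ Module.End.maxGenEigenspace (ι B) μ := by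
      have hsplit := iSup_split_single (fun μ' => Module.End.maxGenEigenspace (ι B) μ') μ
      have hwtop : w ∈ Module.End.maxGenEigenspace (ι B) μ ⊔
          ⨆ (μ') (_ : μ' ≠ μ), Module.End.maxGenEigenspace (ι B) μ' := by
        rw [← hsplit, Module.End.iSup_maxGenEigenspace_eq_top (ι B)]
        trivial
      obtain ⟨x, hx, y, hy, hxy⟩ := Submodule.mem_sup.mp hwtop
      have hwU : w ∈ Module.End.maxGenEigenspace (ι (exp A)) (Complex.exp μ) :=
        claim1 A μ hw
      have hxU : x ∈ Module.End.maxGenEigenspace (ι (exp A)) (Complex.exp μ) := by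
        have := claim1 B μ hx
        rwa [hAB]
      have hyU : y ∈ Module.End.maxGenEigenspace (ι (exp A)) (Complex.exp μ) := by
        have : y = w - x := by rw [← hxy]; abel
        rw [this]
        exact Submodule.sub_mem _ hwU hxU
      have hyRest : y ∈ ⨆ (ν') (_ : ν' ≠ Complex.exp μ),
          Module.End.maxGenEigenspace (ι (exp A)) ν' := by
        have hle : (⨆ (μ') (_ : μ' ≠ μ), Module.End.maxGenEigenspace (ι B) μ') ≤
            ⨆ (ν') (_ : ν' ≠ Complex.exp μ),
              Module.End.maxGenEigenspace (ι (exp A)) ν' := by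
          refine iSup₂_le fun μ' hμ' => ?_
          by_cases hb : Module.End.maxGenEigenspace (ι B) μ' = ⊥
          · rw [hb]; exact bot_le
          have hμ'B : μ' ∈ spectrum ℂ B := hspec B μ' hb
          have hμ'strip := hB μ' hμ'B
          have hne : Complex.exp μ' ≠ Complex.exp μ :=
            fun hcontra => hμ' (strip_inj hμ'strip hμstrip hcontra)
          refine le_trans ?_ (le_iSup₂_of_le (Complex.exp μ') hne le_rfl)
          have := claim1 B μ'
          rwa [← hAB] at this
        exact hle hy
      have hdisj := Module.End.independent_maxGenEigenspace (ι (exp A)) (Complex.exp μ)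
      have hy0 : y = 0 := by
        have := Submodule.disjoint_def.mp hdisj y hyU hyRest
        exact this
      rw [← hxy, hy0, add_zero]
      exact hx
    -- both generalized eigenvectors: conclude
    rw [hmem] at hw hwB
    obtain ⟨k1, hk1⟩ := hw
    obtain ⟨k2, hk2⟩ := hwB
    have hk1' := pow_mulVec_zero_mono (le_max_left k1 (max k2 2)) hk1
    have hk2' := pow_mulVec_zero_mono (le_trans (le_max_left k2 2) (le_max_right k1 (max k2 2))) hk2
    have hm2 : 2 ≤ max k1 (max k2 2) := le_trans (le_max_right k2 2) (le_max_right k1 (max k2 2))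
    have := mulVec_eq_of_exp_eq hAB hm2 hk1' hk2'
    rw [LinearMap.mem_ker, LinearMap.sub_apply]
    simp only [hι, Matrix.toLinAlgEquiv'_apply]
    rw [this, sub_self]
  rw [Module.End.iSup_maxGenEigenspace_eq_top (ι A)] at hmain
  have hv := hmain (Submodule.mem_top : v ∈ ⊤)
  rw [LinearMap.mem_ker, LinearMap.sub_apply] at hv
  simp only [hι, Matrix.toLinAlgEquiv'_apply] at hv
  exact sub_eq_zero.mp hv

end helpers

end GeodesicGrassmannAux

/-- Let `P, Q` be rank-`k` orthogonal projections such that `(I-2Q)(I-2P)` has no negative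
eigenvalues, and let `Ω = (1/2) log ((I-2Q)(I-2P))`.  Then for every `t ∈ [0,1]`, the matrix
`γ(t) = e^{tΩ} P e^{-tΩ}` is a Hermitian idempotent of rank `k`, i.e. it lies in the
Grassmannian. -/
theorem geodesic_point_mem_Grassmannian {n k : ℕ}
    (P Q : Matrix (Fin n) (Fin n) ℂ)
    (hP : P * P = P) (hPh : P.conjTranspose = P) (hPrank : P.rank = k)
    (hQ : Q * Q = Q) (hQh : Q.conjTranspose = Q) (hQrank : Q.rank = k)
    (hneg : HasNoNegativeEigenvalue ((1 - (2 : ℂ) • Q) * (1 - (2 : ℂ) • P)))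
    (L Ω : Matrix (Fin n) (Fin n) ℂ)
    (hL : IsPrincipalLog ((1 - (2 : ℂ) • Q) * (1 - (2 : ℂ) • P)) L)
    (hΩ : Ω = (1 / 2 : ℂ) • L) :
    ∀ t ∈ Set.Icc (0 : ℝ) 1,
      (NormedSpace.exp ((t : ℂ) • Ω) * P * NormedSpace.exp (-((t : ℂ) • Ω))) *
          (NormedSpace.exp ((t : ℂ) • Ω) * P * NormedSpace.exp (-((t : ℂ) • Ω))) =
        NormedSpace.exp ((t : ℂ) • Ω) * P * NormedSpace.exp (-((t : ℂ) • Ω)) ∧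
      (NormedSpace.exp ((t : ℂ) • Ω) * P *
          NormedSpace.exp (-((t : ℂ) • Ω))).conjTranspose =
        NormedSpace.exp ((t : ℂ) • Ω) * P * NormedSpace.exp (-((t : ℂ) • Ω)) ∧
      (NormedSpace.exp ((t : ℂ) • Ω) * P * NormedSpace.exp (-((t : ℂ) • Ω))).rank = k := by
  obtain ⟨hexpL, hspecL⟩ := hL
  set U : Matrix (Fin n) (Fin n) ℂ := (1 - (2 : ℂ) • Q) * (1 - (2 : ℂ) • P) with hU
  -- involutions
  have hinv : ∀ (R : Matrix (Fin n) (Fin n) ℂ), R * R = R →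
      (1 - (2 : ℂ) • R) * (1 - (2 : ℂ) • R) = 1 := by
    intro R hR
    rw [mul_sub, sub_mul, sub_mul, one_mul, one_mul, mul_one, smul_mul_smul_comm, hR]
    module
  have hUh : U.conjTranspose = (1 - (2 : ℂ) • P) * (1 - (2 : ℂ) • Q) := by
    rw [hU, Matrix.conjTranspose_mul, Matrix.conjTranspose_sub, Matrix.conjTranspose_smul,
      Matrix.conjTranspose_sub, Matrix.conjTranspose_smul, Matrix.conjTranspose_one, hPh, hQh]
    norm_num
  have hUUh : U * U.conjTranspose = 1 := by
    rw [hU, hUh]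
    calc (1 - (2:ℂ) • Q) * (1 - (2:ℂ) • P) * ((1 - (2:ℂ) • P) * (1 - (2:ℂ) • Q))
        = (1 - (2:ℂ) • Q) * ((1 - (2:ℂ) • P) * (1 - (2:ℂ) • P)) * (1 - (2:ℂ) • Q) := by
          noncomm_ring
      _ = 1 := by rw [hinv P hP, mul_one, hinv Q hQ]
  have hUhU : U.conjTranspose * U = 1 := by
    rw [hU, hUh]
    calc (1 - (2:ℂ) • P) * (1 - (2:ℂ) • Q) * ((1 - (2:ℂ) • Q) * (1 - (2:ℂ) • P))
        = (1 - (2:ℂ) • P) * ((1 - (2:ℂ) • Q) * (1 - (2:ℂ) • Q)) * (1 - (2:ℂ) • P) := by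
          noncomm_ring
      _ = 1 := by rw [hinv Q hQ, mul_one, hinv P hP]
  -- L is skew-hermitian
  have hexpLh : NormedSpace.exp L.conjTranspose = U.conjTranspose := by
    rw [Matrix.exp_conjTranspose, hexpL]
  have hsum : NormedSpace.exp (-(L.conjTranspose)) * NormedSpace.exp L.conjTranspose = 1 := by
    rw [← Matrix.exp_add_of_commute _ _ ((Commute.refl L.conjTranspose).neg_left), neg_add_cancel,
      NormedSpace.exp_zero]
  have hexpnegLh : NormedSpace.exp (-(L.conjTranspose)) = U := by
    calc NormedSpace.exp (-(L.conjTranspose))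
        = NormedSpace.exp (-(L.conjTranspose)) * (U.conjTranspose * U) := by
          rw [hUhU, mul_one]
      _ = (NormedSpace.exp (-(L.conjTranspose)) * NormedSpace.exp L.conjTranspose) * U := by
          rw [hexpLh, mul_assoc]
      _ = U := by rw [hsum, one_mul]
  have hspecneg : ∀ μ ∈ spectrum ℂ (-(L.conjTranspose)), μ.im ∈ Set.Ioo (-π) π := by
    intro μ hμ
    have key : (algebraMap ℂ (Matrix (Fin n) (Fin n) ℂ)) μ - (-(L.conjTranspose))
        = -(((algebraMap ℂ (Matrix (Fin n) (Fin n) ℂ)) (-(starRingEnd ℂ μ)) - L).conjTranspose) := by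
      rw [Algebra.algebraMap_eq_smul_one, Algebra.algebraMap_eq_smul_one,
        Matrix.conjTranspose_sub, Matrix.conjTranspose_smul, Matrix.conjTranspose_one]
      simp only [star_neg, Complex.star_def, Complex.conj_conj]
      module
    have hμ' : (-(starRingEnd ℂ μ)) ∈ spectrum ℂ L := by
      rw [spectrum.mem_iff] at hμ ⊢
      intro hcontra
      exact hμ (by rw [key]; exact ((Matrix.isUnit_conjTranspose _).mpr hcontra).neg)
    have := hspecL _ hμ'
    simp only [Complex.neg_im, Complex.conj_im, neg_neg] at this
    simpa using this
  have hLh : -(L.conjTranspose) = L :=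
    GeodesicGrassmannAux.eq_of_exp_eq _ _ (hexpnegLh.trans hexpL.symm) hspecneg hspecL
  have hLh' : L.conjTranspose = -L := neg_eq_iff_eq_neg.mp hLh
  have hΩh : Ω.conjTranspose = -Ω := by
    rw [hΩ, Matrix.conjTranspose_smul, hLh', smul_neg]
    congr 2
    simp
  intro t _
  set E := NormedSpace.exp ((t : ℂ) • Ω) with hE
  set F := NormedSpace.exp (-((t : ℂ) • Ω)) with hF
  have hEF : E * F = 1 := by
    rw [hE, hF, ← Matrix.exp_add_of_commute _ _ ((Commute.refl ((t : ℂ) • Ω)).neg_right), add_neg_cancel,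
      NormedSpace.exp_zero]
  have hFE : F * E = 1 := by
    rw [hE, hF, ← Matrix.exp_add_of_commute _ _ ((Commute.refl ((t : ℂ) • Ω)).neg_left), neg_add_cancel,
      NormedSpace.exp_zero]
  have hEh : E.conjTranspose = F := by
    rw [hE, hF, ← Matrix.exp_conjTranspose]
    congr 1
    rw [Matrix.conjTranspose_smul, hΩh, Complex.star_def, Complex.conj_ofReal, smul_neg]
  have hFh : F.conjTranspose = E := by
    rw [hE, hF, ← Matrix.exp_conjTranspose]
    congr 1
    rw [Matrix.conjTranspose_neg, Matrix.conjTranspose_smul, hΩh, Complex.star_def,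
      Complex.conj_ofReal, smul_neg, neg_neg]
  refine ⟨?_, ?_, ?_⟩
  · calc E * P * F * (E * P * F) = E * (P * (F * E) * P) * F := by noncomm_ring
      _ = E * P * F := by rw [hFE, mul_one, hP]
  · rw [Matrix.conjTranspose_mul, Matrix.conjTranspose_mul, hPh, hEh, hFh, mul_assoc]
  · have hdetE : IsUnit E.det :=
      IsUnit.of_mul_eq_one F.det (by rw [← Matrix.det_mul, hEF, Matrix.det_one])
    have hdetF : IsUnit F.det :=
      IsUnit.of_mul_eq_one E.det (by rw [← Matrix.det_mul, hFE, Matrix.det_one])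
    rw [Matrix.rank_mul_eq_left_of_isUnit_det F (E * P) hdetF,
      Matrix.rank_mul_eq_right_of_isUnit_det E P hdetE, hPrank]
end

section
/- The sum of the interior angles of a geodesic triangle in a strongly convex ball of a nonnegatively curved Riemannian manifold is at least π: α + β + γ ≥ π. -/
open scoped Real
open EuclideanGeometry
set_option maxHeartbeats 1000000

private lemma dist_two (x y : EuclideanSpace ℝ (Fin 2)) :
    dist x y = Real.sqrt ((x 0 - y 0) ^ 2 + (x 1 - y 1) ^ 2) := by
  rw [EuclideanSpace.dist_eq, Fin.sum_univ_two]
  simp [Real.dist_eq, sq_abs]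

private lemma le_of_cos_le_cos {x y : ℝ} (hx : x ∈ Set.Icc 0 π) (hy : y ∈ Set.Icc 0 π)
    (h : Real.cos x ≤ Real.cos y) : y ≤ x :=
  (Real.strictAntiOn_cos.le_iff_ge hx hy).mp h

/-- The sum of the interior angles of a geodesic triangle in a strongly convex ball of a
nonnegatively curved manifold is at least `π`: the angles `α, β, γ ∈ [0, π]` at the distinct
vertices `A, B, C` satisfy the law-of-cosines inequalities of nonnegative curvature, whence
`α + β + γ ≥ π`. -/
theorem angle_sum_ge_pi {M : Type*} [MetricSpace M]
    (A B C : M) (hAB : A ≠ B) (hAC : A ≠ C) (hBC : B ≠ C)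
    (α β γ : ℝ)
    (hα01 : α ∈ Set.Icc 0 π) (hβ01 : β ∈ Set.Icc 0 π) (hγ01 : γ ∈ Set.Icc 0 π)
    (hγ : dist B A ^ 2 ≤ dist C A ^ 2 + dist C B ^ 2 -
      2 * dist C A * dist C B * Real.cos γ)
    (hα : dist C B ^ 2 ≤ dist C A ^ 2 + dist B A ^ 2 -
      2 * dist C A * dist B A * Real.cos α)
    (hβ : dist C A ^ 2 ≤ dist C B ^ 2 + dist B A ^ 2 -
      2 * dist B A * dist C B * Real.cos β) :
    α + β + γ ≥ π := by
  set a := dist B A with ha_def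
  set b := dist C A with hb_def
  set c := dist C B with hc_def
  have ha : 0 < a := dist_pos.mpr (Ne.symm hAB)
  have hb : 0 < b := dist_pos.mpr (Ne.symm hAC)
  have hc : 0 < c := dist_pos.mpr (Ne.symm hBC)
  -- triangle inequalities
  have t1 : c ≤ a + b := by
    calc c = dist C B := rfl
    _ ≤ dist C A + dist A B := dist_triangle C A B
    _ = a + b := by rw [dist_comm A B]; ring
  have t2 : b ≤ a + c := by
    calc b = dist C A := rfl
    _ ≤ dist C B + dist B A := dist_triangle C B A
    _ = a + c := by ring
  have t3 : a ≤ b + c := by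
    calc a = dist B A := rfl
    _ ≤ dist B C + dist C A := dist_triangle B C A
    _ = b + c := by rw [dist_comm B C]; ring
  set x : ℝ := (a ^ 2 + b ^ 2 - c ^ 2) / (2 * a) with hx_def
  have hkey : 0 ≤ b ^ 2 - x ^ 2 := by
    have h4 : 4 * a ^ 2 * (b ^ 2 - x ^ 2) =
        (a + b + c) * (a + b - c) * (c + a - b) * (c + b - a) := by
      rw [hx_def]
      field_simp
      ring
    have hP : (0:ℝ) ≤ (a + b + c) * (a + b - c) * (c + a - b) * (c + b - a) :=
      mul_nonneg (mul_nonneg (mul_nonneg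
        (by linarith) (by linarith)) (by linarith)) (by linarith)
    have h4a : (0:ℝ) < 4 * a ^ 2 := by positivity
    nlinarith [hP, h4a, h4]
  set y : ℝ := Real.sqrt (b ^ 2 - x ^ 2) with hy_def
  have hy2 : y ^ 2 = b ^ 2 - x ^ 2 := Real.sq_sqrt hkey
  set PA : EuclideanSpace ℝ (Fin 2) := WithLp.toLp 2 (![0, 0] : Fin 2 → ℝ) with hPA
  set PB : EuclideanSpace ℝ (Fin 2) := WithLp.toLp 2 (![a, 0] : Fin 2 → ℝ) with hPB
  set PC : EuclideanSpace ℝ (Fin 2) := WithLp.toLp 2 (![x, y] : Fin 2 → ℝ) with hPC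
  have hPA0 : PA 0 = 0 := rfl
  have hPA1 : PA 1 = 0 := rfl
  have hPB0 : PB 0 = a := rfl
  have hPB1 : PB 1 = 0 := rfl
  have hPC0 : PC 0 = x := rfl
  have hPC1 : PC 1 = y := rfl
  have dBA : dist PB PA = a := by
    rw [dist_two, hPA0, hPA1, hPB0, hPB1]
    rw [show (a - 0) ^ 2 + (0 - 0 : ℝ) ^ 2 = a ^ 2 by ring]
    exact Real.sqrt_sq ha.le
  have dCA : dist PC PA = b := by
    rw [dist_two, hPA0, hPA1, hPC0, hPC1]
    rw [show (x - 0) ^ 2 + (y - 0) ^ 2 = x ^ 2 + y ^ 2 by ring, hy2,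
      show x ^ 2 + (b ^ 2 - x ^ 2) = b ^ 2 by ring]
    exact Real.sqrt_sq hb.le
  have dCB : dist PC PB = c := by
    rw [dist_two, hPB0, hPB1, hPC0, hPC1]
    have h2ax : 2 * a * x = a ^ 2 + b ^ 2 - c ^ 2 := by
      rw [hx_def]
      field_simp
    rw [show (x - a) ^ 2 + (y - 0) ^ 2 = x ^ 2 - 2 * a * x + a ^ 2 + y ^ 2 by ring,
      hy2, h2ax, show x ^ 2 - (a ^ 2 + b ^ 2 - c ^ 2) + a ^ 2 + (b ^ 2 - x ^ 2) = c ^ 2 by ring]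
    exact Real.sqrt_sq hc.le
  have hBA' : PB ≠ PA := by
    intro h; rw [h] at dBA; simp at dBA; exact ha.ne' dBA.symm
  have hCA' : PC ≠ PA := by
    intro h; rw [h] at dCA; simp at dCA; exact hb.ne' dCA.symm
  -- the comparison angles
  set α' := ∠ PC PA PB with hα'
  set β' := ∠ PC PB PA with hβ'
  set γ' := ∠ PB PC PA with hγ'
  have hsum : β' + γ' + α' = π := by
    have := EuclideanGeometry.angle_add_angle_add_angle_eq_pi (p₂ := PB) PC hBA'
    rwa [EuclideanGeometry.angle_comm PA PB PC] at this
  -- law of cosines for each angle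
  have lawα := EuclideanGeometry.law_cos PC PA PB
  rw [dCB, dCA, dBA] at lawα
  have lawβ := EuclideanGeometry.law_cos PC PB PA
  rw [dCA, dCB, dist_comm PA PB, dBA] at lawβ
  have lawγ := EuclideanGeometry.law_cos PB PC PA
  rw [dist_comm PB PC, dCB, dist_comm PA PC, dCA, dBA] at lawγ
  -- compare the angles
  have lawα' : c ^ 2 = b ^ 2 + a ^ 2 - 2 * b * a * Real.cos α' := by
    rw [pow_two, pow_two, pow_two]; linarith [lawα]
  have lawβ' : b ^ 2 = c ^ 2 + a ^ 2 - 2 * c * a * Real.cos β' := by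
    rw [pow_two, pow_two, pow_two]; linarith [lawβ]
  have lawγ' : a ^ 2 = c ^ 2 + b ^ 2 - 2 * c * b * Real.cos γ' := by
    rw [pow_two, pow_two, pow_two]; linarith [lawγ]
  have hαcos : Real.cos α ≤ Real.cos α' := by
    have hpos : (0:ℝ) < 2 * b * a := by positivity
    have hm : 2 * b * a * Real.cos α ≤ 2 * b * a * Real.cos α' := by linarith
    exact le_of_mul_le_mul_left hm hpos
  have hβcos : Real.cos β ≤ Real.cos β' := by
    have hpos : (0:ℝ) < 2 * c * a := by positivity
    have hm : 2 * c * a * Real.cos β ≤ 2 * c * a * Real.cos β' := by nlinarith [hβ]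
    exact le_of_mul_le_mul_left hm hpos
  have hγcos : Real.cos γ ≤ Real.cos γ' := by
    have hpos : (0:ℝ) < 2 * c * b := by positivity
    have hm : 2 * c * b * Real.cos γ ≤ 2 * c * b * Real.cos γ' := by nlinarith [hγ]
    exact le_of_mul_le_mul_left hm hpos
  have hαmem : α' ∈ Set.Icc 0 π :=
    ⟨EuclideanGeometry.angle_nonneg _ _ _, EuclideanGeometry.angle_le_pi _ _ _⟩
  have hβmem : β' ∈ Set.Icc 0 π :=
    ⟨EuclideanGeometry.angle_nonneg _ _ _, EuclideanGeometry.angle_le_pi _ _ _⟩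
  have hγmem : γ' ∈ Set.Icc 0 π :=
    ⟨EuclideanGeometry.angle_nonneg _ _ _, EuclideanGeometry.angle_le_pi _ _ _⟩
  have h1 : α' ≤ α := le_of_cos_le_cos hα01 hαmem hαcos
  have h2 : β' ≤ β := le_of_cos_le_cos hβ01 hβmem hβcos
  have h3 : γ' ≤ γ := le_of_cos_le_cos hγ01 hγmem hγcos
  linarith
end

section
/- Uniqueness of the semi-parallelogram point: in a metric space where any two points of a convex ball B are joined by a unique midpoint, if X ∈ B satisfies d²(X,C) ≥ (d²(A,C)+d²(B,C))/2 − d²(A,B)/4 for all C ∈ B, then X is the midpoint of A and B. -/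
/-! Taking `C = X` in the hypothesis gives `d(A,X)² + d(B,X)² ≤ d(A,B)²/2`. Together with the
triangle inequality `d(A,B) ≤ d(A,X) + d(B,X)` this forces `d(A,X) = d(B,X) = d(A,B)/2`, so `X` is
a midpoint of `A` and `B`, hence the unique one. -/

lemma eq_half_of_sq_add_sq_le_of_le_add {a b c : ℝ} (hc₀ : 0 ≤ c) (hc : c ≤ a + b)
    (h : a ^ 2 + b ^ 2 ≤ c ^ 2 / 2) : a = c / 2 ∧ b = c / 2 := by
  have hab : a = b := by nlinarith [sq_nonneg (a - b)]
  subst hab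
  have ha : a ≤ c / 2 := by nlinarith
  constructor <;> linarith

lemma dist_eq_half_of_sq_add_sq_le {M : Type*} [PseudoMetricSpace M] {x y z : M}
    (h : dist x z ^ 2 + dist y z ^ 2 ≤ dist x y ^ 2 / 2) :
    dist x z = dist x y / 2 ∧ dist y z = dist x y / 2 :=
  eq_half_of_sq_add_sq_le_of_le_add dist_nonneg (dist_triangle_right x y z) h

theorem semi_parallelogram_point_unique_general {M : Type*} [MetricSpace M] (B : Set M)
    (A B' Mid X : M) (hX : X ∈ B)
    (huniq : ∀ Y ∈ B, dist A Y = dist A B' / 2 → dist B' Y = dist A B' / 2 → Y = Mid)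
    (hspl : ∀ C ∈ B, dist X C ^ 2 ≥
      (dist A C ^ 2 + dist B' C ^ 2) / 2 - dist A B' ^ 2 / 4) :
    X = Mid := by
  have hXX := hspl X hX
  rw [dist_self] at hXX
  obtain ⟨hAX, hBX⟩ := dist_eq_half_of_sq_add_sq_le (x := A) (y := B') (z := X) (by linarith)
  exact huniq X hX hAX hBX

/-- Uniqueness of the semi-parallelogram point: in a convex ball `B` of a metric space in
which `Mid` is the unique midpoint of `A` and `B`, any `X ∈ B` satisfying
`d²(X,C) ≥ (d²(A,C)+d²(B,C))/2 − d²(A,B)/4` for all `C ∈ B` equals `Mid`. -/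
theorem semi_parallelogram_point_unique {M : Type*} [MetricSpace M] (B : Set M)
    (A B' Mid X : M) (hA : A ∈ B) (hB : B' ∈ B) (hMid : Mid ∈ B) (hX : X ∈ B)
    (hMA : dist A Mid = dist A B' / 2) (hMB : dist B' Mid = dist A B' / 2)
    (huniq : ∀ Y ∈ B, dist A Y = dist A B' / 2 → dist B' Y = dist A B' / 2 → Y = Mid)
    (hspl : ∀ C ∈ B, dist X C ^ 2 ≥
      (dist A C ^ 2 + dist B' C ^ 2) / 2 - dist A B' ^ 2 / 4) :
    X = Mid :=
  semi_parallelogram_point_unique_general B A B' Mid X hX huniq hspl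
end

section
/- If the semi-parallelogram law d²(M,C) ≥ (d²(A,C)+d²(B,C))/2 − d²(A,B)/4 holds for all geodesic triangles in a convex ball (M the midpoint of A,B), then for any points A, B, C in the ball, d(A♯B, A♯C) ≥ (1/2) d(B,C). -/
/-! Apply the semi-parallelogram law twice: to the triangle `(A, C, B')` at the midpoint `A♯C`,
which bounds `d(A♯C, B')²` from below, and then to the triangle `(A, B', A♯C)` at the midpoint
`A♯B'`. Since `d(A, A♯C) = d(A, C) / 2`, the terms in `d(A, B')` and `d(A, C)` cancel, leaving
`d(A♯B', A♯C)² ≥ d(B', C)² / 4`. -/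

theorem sq_dist_midpoints_ge {M : Type*} [MetricSpace M] {B : Set M} {m : M → M → M}
    (hmem : ∀ X ∈ B, ∀ Y ∈ B, m X Y ∈ B)
    (hmid : ∀ X ∈ B, ∀ Y ∈ B, dist X (m X Y) = dist X Y / 2)
    (hspl : ∀ X ∈ B, ∀ Y ∈ B, ∀ Z ∈ B, dist (m X Y) Z ^ 2 ≥
      (dist X Z ^ 2 + dist Y Z ^ 2) / 2 - dist X Y ^ 2 / 4)
    {A B' C : M} (hA : A ∈ B) (hB : B' ∈ B) (hC : C ∈ B) :
    (dist B' C / 2) ^ 2 ≤ dist (m A B') (m A C) ^ 2 := by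
  have h₁ := hspl A hA B' hB (m A C) (hmem A hA C hC)
  have h₂ := hspl A hA C hC B' hB
  rw [hmid A hA C hC, dist_comm B' (m A C)] at h₁
  rw [dist_comm C B'] at h₂
  linarith

theorem dist_midpoints_ge_half_general {M : Type*} [MetricSpace M] (B : Set M)
    (m : M → M → M)
    (hmem : ∀ X ∈ B, ∀ Y ∈ B, m X Y ∈ B)
    (hmid₁ : ∀ X ∈ B, ∀ Y ∈ B, dist X (m X Y) = dist X Y / 2)
    (hspl : ∀ X ∈ B, ∀ Y ∈ B, ∀ Z ∈ B, dist (m X Y) Z ^ 2 ≥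
      (dist X Z ^ 2 + dist Y Z ^ 2) / 2 - dist X Y ^ 2 / 4)
    (A B' C : M) (hA : A ∈ B) (hB : B' ∈ B) (hC : C ∈ B) :
    dist (m A B') (m A C) ≥ dist B' C / 2 :=
  (pow_le_pow_iff_left₀ (by positivity) dist_nonneg two_ne_zero).1
    (sq_dist_midpoints_ge hmem hmid₁ hspl hA hB hC)

/-- If the semi-parallelogram law holds in a convex ball `B` of a metric space (with `m X Y`
denoting the midpoint of the unique minimizing geodesic from `X` to `Y`), then for all
`A, B, C` in the ball, `d(A♯B, A♯C) ≥ (1/2) d(B,C)`. -/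
theorem dist_midpoints_ge_half {M : Type*} [MetricSpace M] (B : Set M)
    (m : M → M → M)
    (hmem : ∀ X ∈ B, ∀ Y ∈ B, m X Y ∈ B)
    (hmid₁ : ∀ X ∈ B, ∀ Y ∈ B, dist X (m X Y) = dist X Y / 2)
    (hmid₂ : ∀ X ∈ B, ∀ Y ∈ B, dist Y (m X Y) = dist X Y / 2)
    (hspl : ∀ X ∈ B, ∀ Y ∈ B, ∀ Z ∈ B, dist (m X Y) Z ^ 2 ≥
      (dist X Z ^ 2 + dist Y Z ^ 2) / 2 - dist X Y ^ 2 / 4)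
    (A B' C : M) (hA : A ∈ B) (hB : B' ∈ B) (hC : C ∈ B) :
    dist (m A B') (m A C) ≥ dist B' C / 2 :=
  dist_midpoints_ge_half_general B m hmem hmid₁ hspl A B' C hA hB hC
end

section
/- Let p ≥ 1 be an integer. In a convex ball of a metric space with unique constant-speed geodesics where the semi-parallelogram law holds, for any three points A, B, C one has d(A ♯_{(p−1)/p} B, A ♯_{(p−1)/p} C) ≥ ((p−1)/p) d(B,C). -/
/-- Unique constant-speed geodesics `sharp P Q t = P ♯ₜ Q` inside a convex ball `B` of a
metric space, in which the semi-parallelogram law holds. -/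
structure SharpFamily (M : Type*) [MetricSpace M] (B : Set M) where
  sharp : M → M → ℝ → M
  sharp_mem : ∀ {P Q : M}, P ∈ B → Q ∈ B → ∀ t ∈ Set.Icc (0 : ℝ) 1, sharp P Q t ∈ B
  sharp_zero : ∀ P Q : M, sharp P Q 0 = P
  sharp_one : ∀ P Q : M, sharp P Q 1 = Q
  dist_sharp : ∀ {P Q : M}, P ∈ B → Q ∈ B → ∀ s ∈ Set.Icc (0 : ℝ) 1,
    ∀ t ∈ Set.Icc (0 : ℝ) 1, dist (sharp P Q s) (sharp P Q t) = |t - s| * dist P Q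
  /-- midpoints along a geodesic reparametrize affinely (uniqueness of geodesics) -/
  mid_reparam : ∀ {P Q : M}, P ∈ B → Q ∈ B → ∀ s ∈ Set.Icc (0 : ℝ) 1,
    ∀ t ∈ Set.Icc (0 : ℝ) 1,
      sharp (sharp P Q s) (sharp P Q t) (1 / 2) = sharp P Q ((s + t) / 2)
  /-- semi-parallelogram law in the ball -/
  spl : ∀ {X Y Z : M}, X ∈ B → Y ∈ B → Z ∈ B →
    dist (sharp X Y (1 / 2)) Z ^ 2 ≥ (dist X Z ^ 2 + dist Y Z ^ 2) / 2 - dist X Y ^ 2 / 4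

/-- Dyadic rationals in `[0,1]`, as an inductive predicate. -/
inductive SFDyadic : ℝ → Prop
  | zero : SFDyadic 0
  | one : SFDyadic 1
  | mid {s t : ℝ} : SFDyadic s → SFDyadic t → SFDyadic ((s + t) / 2)

lemma SFDyadic.mem_Icc {s : ℝ} (h : SFDyadic s) : s ∈ Set.Icc (0 : ℝ) 1 := by
  induction h with
  | zero => exact ⟨le_refl _, zero_le_one⟩
  | one => exact ⟨zero_le_one, le_refl _⟩
  | mid _ _ ihs iht =>
      exact ⟨by linarith [ihs.1, iht.1], by linarith [ihs.2, iht.2]⟩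

/-- Every `k / 2^n` with `k ≤ 2^n` is dyadic. -/
lemma SFDyadic_div_pow (n : ℕ) : ∀ k : ℕ, k ≤ 2 ^ n → SFDyadic ((k : ℝ) / 2 ^ n) := by
  induction n with
  | zero =>
      intro k hk
      interval_cases k
      · simpa using SFDyadic.zero
      · simpa using SFDyadic.one
  | succ n ih =>
      intro k hk
      rcases le_or_gt k (2 ^ n) with h | h
      · have h0 : SFDyadic ((0 + (k : ℝ) / 2 ^ n) / 2) := SFDyadic.mid SFDyadic.zero (ih k h)
        have he : ((k : ℝ) / 2 ^ (n + 1)) = (0 + (k : ℝ) / 2 ^ n) / 2 := by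
          rw [pow_succ]; ring
        rw [he]; exact h0
      · have hk' : k - 2 ^ n ≤ 2 ^ n := by omega
        have h1 : SFDyadic ((((k - 2 ^ n : ℕ) : ℝ) / 2 ^ n + 1) / 2) :=
          SFDyadic.mid (ih _ hk') SFDyadic.one
        have hc : ((k - 2 ^ n : ℕ) : ℝ) = (k : ℝ) - 2 ^ n := by
          have : (2 : ℝ) ^ n = ((2 ^ n : ℕ) : ℝ) := by push_cast; ring
          rw [this, ← Nat.cast_sub h.le]
        have he : ((k : ℝ) / 2 ^ (n + 1)) = (((k - 2 ^ n : ℕ) : ℝ) / 2 ^ n + 1) / 2 := by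
          rw [hc, pow_succ]
          have h2 : (2 : ℝ) ^ n ≠ 0 := by positivity
          field_simp
          ring
        rw [he]; exact h1

/-- The comparison inequality along one geodesic (exact in Euclidean space). -/
lemma SharpFamily.dist_sq_sharp_ge {M : Type*} [MetricSpace M] {B : Set M}
    (G : SharpFamily M B) {P Q Z : M} (hP : P ∈ B) (hQ : Q ∈ B) (hZ : Z ∈ B)
    {s : ℝ} (hs : SFDyadic s) :
    dist (G.sharp P Q s) Z ^ 2 ≥
      s * dist Q Z ^ 2 + (1 - s) * dist P Z ^ 2 - s * (1 - s) * dist P Q ^ 2 := by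
  induction hs with
  | zero =>
      rw [G.sharp_zero]
      nlinarith [sq_nonneg (dist P Z)]
  | one =>
      rw [G.sharp_one]
      nlinarith [sq_nonneg (dist Q Z)]
  | @mid s₁ s₂ hs₁ hs₂ ih₁ ih₂ =>
      have hI₁ := hs₁.mem_Icc
      have hI₂ := hs₂.mem_Icc
      have hX : G.sharp P Q s₁ ∈ B := G.sharp_mem hP hQ s₁ hI₁
      have hY : G.sharp P Q s₂ ∈ B := G.sharp_mem hP hQ s₂ hI₂
      have hmid := G.mid_reparam hP hQ s₁ hI₁ s₂ hI₂
      have hspl := G.spl hX hY hZ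
      rw [hmid] at hspl
      have hXY : dist (G.sharp P Q s₁) (G.sharp P Q s₂) = |s₂ - s₁| * dist P Q :=
        G.dist_sharp hP hQ s₁ hI₁ s₂ hI₂
      have hXY2 : dist (G.sharp P Q s₁) (G.sharp P Q s₂) ^ 2 = (s₂ - s₁) ^ 2 * dist P Q ^ 2 := by
        rw [hXY, mul_pow, sq_abs]
      rw [hXY2] at hspl
      nlinarith [ih₁, ih₂, hspl]

/-- The two-geodesic comparison inequality (exact in Euclidean space). -/
lemma SharpFamily.dist_sq_sharp_sharp_ge {M : Type*} [MetricSpace M] {B : Set M}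
    (G : SharpFamily M B) {A B' C : M} (hA : A ∈ B) (hB : B' ∈ B) (hC : C ∈ B)
    {s t : ℝ} (hs : SFDyadic s) (ht : SFDyadic t) :
    dist (G.sharp A B' s) (G.sharp A C t) ^ 2 ≥
      s * t * dist B' C ^ 2 + s * (s - t) * dist A B' ^ 2 + t * (t - s) * dist A C ^ 2 := by
  have hsI := hs.mem_Icc
  have hZ : G.sharp A B' s ∈ B := G.sharp_mem hA hB s hsI
  induction ht with
  | zero =>
      rw [G.sharp_zero]
      have h0 : dist (G.sharp A B' s) A = |0 - s| * dist A B' := by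
        have := G.dist_sharp hA hB s hsI 0 ⟨le_refl _, zero_le_one⟩
        rw [G.sharp_zero] at this
        exact this
      have h0' : dist (G.sharp A B' s) A ^ 2 = s ^ 2 * dist A B' ^ 2 := by
        rw [h0, mul_pow, sq_abs]; ring
      nlinarith [h0']
  | one =>
      rw [G.sharp_one]
      have := G.dist_sq_sharp_ge hA hB hC hs
      nlinarith [this]
  | @mid t₁ t₂ ht₁ ht₂ ih₁ ih₂ =>
      have hI₁ := ht₁.mem_Icc
      have hI₂ := ht₂.mem_Icc
      have hY₁ : G.sharp A C t₁ ∈ B := G.sharp_mem hA hC t₁ hI₁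
      have hY₂ : G.sharp A C t₂ ∈ B := G.sharp_mem hA hC t₂ hI₂
      have hmid := G.mid_reparam hA hC t₁ hI₁ t₂ hI₂
      have hspl := G.spl hY₁ hY₂ hZ
      rw [hmid] at hspl
      have hYY : dist (G.sharp A C t₁) (G.sharp A C t₂) ^ 2 = (t₂ - t₁) ^ 2 * dist A C ^ 2 := by
        rw [G.dist_sharp hA hC t₁ hI₁ t₂ hI₂, mul_pow, sq_abs]
      rw [hYY] at hspl
      rw [dist_comm] at hspl
      rw [dist_comm (G.sharp A C t₁)] at hspl
      rw [dist_comm (G.sharp A C t₂)] at hspl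
      nlinarith [ih₁, ih₂, hspl]

/-- The diagonal case: for dyadic `t`, `d(A♯ₜB', A♯ₜC) ≥ t·d(B',C)`. -/
lemma SharpFamily.dist_sharp_ge_dyadic {M : Type*} [MetricSpace M] {B : Set M}
    (G : SharpFamily M B) {A B' C : M} (hA : A ∈ B) (hB : B' ∈ B) (hC : C ∈ B)
    {t : ℝ} (ht : SFDyadic t) :
    dist (G.sharp A B' t) (G.sharp A C t) ≥ t * dist B' C := by
  have h := G.dist_sq_sharp_sharp_ge hA hB hC ht ht
  have h2 : (t * dist B' C) ^ 2 ≤ dist (G.sharp A B' t) (G.sharp A C t) ^ 2 := by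
    nlinarith [h]
  have htD : 0 ≤ t * dist B' C := mul_nonneg ht.mem_Icc.1 dist_nonneg
  calc t * dist B' C = Real.sqrt ((t * dist B' C) ^ 2) := (Real.sqrt_sq htD).symm
    _ ≤ Real.sqrt (dist (G.sharp A B' t) (G.sharp A C t) ^ 2) := Real.sqrt_le_sqrt h2
    _ = dist (G.sharp A B' t) (G.sharp A C t) := Real.sqrt_sq dist_nonneg

/-- For every integer `p ≥ 1` and points `A, B, C` in the ball,
`d(A ♯_{(p-1)/p} B, A ♯_{(p-1)/p} C) ≥ ((p-1)/p) d(B,C)`. -/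
theorem dist_sharp_ge_frac {M : Type*} [MetricSpace M] {B : Set M}
    (G : SharpFamily M B) (p : ℕ) (hp : 1 ≤ p)
    (A B' C : M) (hA : A ∈ B) (hB : B' ∈ B) (hC : C ∈ B) :
    dist (G.sharp A B' (((p : ℝ) - 1) / p)) (G.sharp A C (((p : ℝ) - 1) / p)) ≥
      (((p : ℝ) - 1) / p) * dist B' C := by
  set t₀ : ℝ := ((p : ℝ) - 1) / p with ht₀def
  have hp' : (1 : ℝ) ≤ (p : ℝ) := by exact_mod_cast hp
  have hppos : (0 : ℝ) < (p : ℝ) := by linarith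
  have ht₀0 : 0 ≤ t₀ := by
    apply div_nonneg <;> linarith
  have ht₀1 : t₀ < 1 := by
    rw [div_lt_one hppos]; linarith
  have ht₀I : t₀ ∈ Set.Icc (0 : ℝ) 1 := ⟨ht₀0, ht₀1.le⟩
  rw [ge_iff_le]
  apply le_of_forall_pos_le_add
  intro ε hε
  set a := dist A B' with ha
  set c := dist A C with hc
  set D := dist B' C with hD
  set K : ℝ := a + c + D + 1 with hK
  have hK1 : (1 : ℝ) ≤ K := by
    have := dist_nonneg (x := A) (y := B')
    have := dist_nonneg (x := A) (y := C)
    have := dist_nonneg (x := B') (y := C)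
    simp only [hK]; nlinarith
  have hKpos : (0 : ℝ) < K := by linarith
  -- choose n with (1/2)^n * K < ε
  obtain ⟨n, hn⟩ := exists_pow_lt_of_lt_one (div_pos hε hKpos) (by norm_num : (1:ℝ)/2 < 1)
  have hn' : (1 / 2 : ℝ) ^ n * K < ε := by
    rw [← lt_div_iff₀ hKpos]; exact hn
  -- the dyadic approximation s = ⌊t₀ 2^n⌋ / 2^n
  have h2n : (0 : ℝ) < 2 ^ n := by positivity
  set k : ℕ := (⌊t₀ * 2 ^ n⌋).toNat with hkdef
  have hfl0 : 0 ≤ ⌊t₀ * 2 ^ n⌋ := Int.floor_nonneg.mpr (by positivity)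
  have hkcast : ((k : ℝ)) = (⌊t₀ * 2 ^ n⌋ : ℝ) := by
    rw [hkdef]
    exact_mod_cast Int.toNat_of_nonneg hfl0
  have hfle : ((k : ℝ)) ≤ t₀ * 2 ^ n := by rw [hkcast]; exact Int.floor_le _
  have hflt : t₀ * 2 ^ n < (k : ℝ) + 1 := by rw [hkcast]; exact Int.lt_floor_add_one _
  have hkle : k ≤ 2 ^ n := by
    have : ((k : ℝ)) < 2 ^ n := lt_of_le_of_lt hfle (by nlinarith)
    exact_mod_cast this.le
  set s : ℝ := (k : ℝ) / 2 ^ n with hsdef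
  have hsdy : SFDyadic s := by
    have := SFDyadic_div_pow n k hkle
    simpa [hsdef] using this
  have hsI := hsdy.mem_Icc
  have hst : s ≤ t₀ := by
    rw [hsdef, div_le_iff₀ h2n]; linarith
  have hts : t₀ - s ≤ (1 / 2 : ℝ) ^ n := by
    rw [hsdef]
    rw [div_pow, one_pow]
    rw [sub_le_iff_le_add]
    rw [← add_div, le_div_iff₀ h2n]
    linarith
  -- main chain
  have hdy := G.dist_sharp_ge_dyadic hA hB hC hsdy
  -- Lipschitz transfer from s to t₀
  have hLB : dist (G.sharp A B' s) (G.sharp A B' t₀) = (t₀ - s) * a := by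
    rw [G.dist_sharp hA hB s hsI t₀ ht₀I, abs_of_nonneg (by linarith)]
  have hLC : dist (G.sharp A C s) (G.sharp A C t₀) = (t₀ - s) * c := by
    rw [G.dist_sharp hA hC s hsI t₀ ht₀I, abs_of_nonneg (by linarith)]
  have htri : dist (G.sharp A B' s) (G.sharp A C s) ≤
      dist (G.sharp A B' s) (G.sharp A B' t₀) +
      dist (G.sharp A B' t₀) (G.sharp A C t₀) +
      dist (G.sharp A C t₀) (G.sharp A C s) := dist_triangle4 _ _ _ _
  rw [hLB] at htri
  rw [dist_comm (G.sharp A C t₀), hLC] at htri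
  have hDnn : (0 : ℝ) ≤ D := dist_nonneg
  have hann : (0 : ℝ) ≤ a := dist_nonneg
  have hcnn : (0 : ℝ) ≤ c := dist_nonneg
  have hpow_nn : (0 : ℝ) ≤ (1/2 : ℝ) ^ n := by positivity
  have hts0 : 0 ≤ t₀ - s := by linarith
  -- t₀ D ≤ s D + (t₀ - s) D ≤ f(s) + (t₀-s) D ≤ f(t₀) + (t₀-s)(a+c+D) ≤ f(t₀) + (1/2)^n K < f(t₀)+ε
  have key : t₀ * D ≤ dist (G.sharp A B' t₀) (G.sharp A C t₀) + (t₀ - s) * (a + c + D) := by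
    nlinarith [hdy, htri]
  have hfinal : (t₀ - s) * (a + c + D) ≤ (1/2:ℝ)^n * K := by
    have h1 : (t₀ - s) * (a + c + D) ≤ (1/2:ℝ)^n * (a + c + D) := by
      apply mul_le_mul_of_nonneg_right hts (by linarith)
    have h2 : (1/2:ℝ)^n * (a + c + D) ≤ (1/2:ℝ)^n * K := by
      apply mul_le_mul_of_nonneg_left (by linarith) hpow_nn
    linarith
  linarith
end
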